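/- Let I ⊆ P be a monomial ideal (an ideal generated by monomials), let O(I) be the set of exponent vectors t such that X^t ∉ I, and let Φ be a linear shift of P, i.e. the K-algebra homomorphism with Φ(xᵢ) = aᵢxᵢ + bᵢ, aᵢ ∈ K ∖ {0}, bᵢ ∈ K. Then the image ideal Φ(I) = Ideal.map Φ I has GFan number 1, the residue classes of the monomials X^t, t ∈ O(I), form a K-vector-space basis of P/Φ(I), and any order ideal whose monomial residue classes form a K-basis of P/Φ(I) equals O(I). -/

import Mathlib

/-!
A linear shift `Φ : xᵢ ↦ aᵢ xᵢ + bᵢ` is triangular for the componentwise order on exponents: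
every monomial in the support of `Φ(X^t)` divides `X^t`. Its inverse is again a linear shift,
so `Φ` maps the span `N_O` of the monomials of any order ideal `O` onto itself, and it preserves
the leading monomial for every monomial order; hence `LT_σ(Φ(I)) = LT_σ(I) = I` for all `σ`.
A monomial ideal is spanned by the monomials it contains, so `P = N_{O(I)} ⊕ I`, and applying
`Φ` gives `P = N_{O(I)} ⊕ Φ(I)`. Conversely, if the monomials of an order ideal `O` form a
basis modulo `Φ(I)`, then `P = N_O ⊕ Φ(I)`, and applying `Φ⁻¹` gives `P = N_O ⊕ I`, which
forces `O = O(I)`.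
-/

open MvPolynomial

/-- The leading monomial (σ-largest exponent vector in the support) of a polynomial. -/
noncomputable def leadMonomial {n : ℕ} {K : Type*} [Field K]
    (m : MonomialOrder (Fin n)) (f : MvPolynomial (Fin n) K) : Fin n →₀ ℕ :=
  m.toSyn.symm (f.support.sup fun s => m.toSyn s)

/-- The leading term ideal of an ideal. -/
noncomputable def leadTermIdeal {n : ℕ} {K : Type*} [Field K]
    (m : MonomialOrder (Fin n)) (I : Ideal (MvPolynomial (Fin n) K)) :
    Ideal (MvPolynomial (Fin n) K) :=
  Ideal.span {g | ∃ f ∈ I, f ≠ 0 ∧ g = monomial (leadMonomial m f) (1 : K)}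

open scoped MonomialOrder

namespace MvPolynomial

section CommSemiring

variable {σ R : Type*} [CommSemiring R]

theorem mul_mem_restrictSupport_Iic {p q : MvPolynomial σ R} {u v : σ →₀ ℕ}
    (hp : p ∈ restrictSupport R (Set.Iic u)) (hq : q ∈ restrictSupport R (Set.Iic v)) :
    p * q ∈ restrictSupport R (Set.Iic (u + v)) := by
  refine restrictSupport_mono R (Set.add_subset_iff.2 fun x hx y hy => ?_) <|
    restrictSupport_add R _ _ ▸ Submodule.mul_mem_mul hp hq
  exact add_le_add (Set.mem_Iic.1 hx) (Set.mem_Iic.1 hy)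

theorem pow_mem_restrictSupport_Iic {p : MvPolynomial σ R} {u : σ →₀ ℕ}
    (hp : p ∈ restrictSupport R (Set.Iic u)) (k : ℕ) :
    p ^ k ∈ restrictSupport R (Set.Iic (k • u)) := by
  induction k with
  | zero =>
    rw [pow_zero, zero_smul, ← C_1, ← monomial_zero']
    exact (monomial_mem_restrictSupport R).2 (.inl Set.self_mem_Iic)
  | succ k ih => simpa [pow_succ, succ_nsmul] using mul_mem_restrictSupport_Iic ih hp

theorem isCompl_restrictSupport_iff [Nontrivial R] {s t : Set (σ →₀ ℕ)} :
    IsCompl (restrictSupport R s) (restrictSupport R t) ↔ IsCompl s t := by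
  rw [restrictSupport, restrictSupport, AddMonoidAlgebra.supported_eq_map,
    AddMonoidAlgebra.supported_eq_map]
  refine (OrderIso.isCompl_iff (Submodule.orderIsoMapComap _)).symm.trans ?_
  rw [isCompl_iff, isCompl_iff]
  exact and_congr Finsupp.disjoint_supported_supported_iff
    Finsupp.codisjoint_supported_supported_iff

theorem restrictScalars_span_monomial_image (S : Set (σ →₀ ℕ)) :
    (Ideal.span ((monomial · (1 : R)) '' S)).restrictScalars R =
      restrictSupport R (upperClosure S) := by
  ext f
  simp only [Submodule.restrictScalars_mem, mem_ideal_span_monomial_image,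
    mem_restrictSupport_iff, Set.subset_def, SetLike.mem_coe, mem_upperClosure]

theorem isLowerSet_setOf_monomial_notMem (I : Ideal (MvPolynomial σ R)) :
    IsLowerSet {t | monomial t (1 : R) ∉ I} := by
  intro t s hst ht hs
  obtain ⟨u, rfl⟩ := exists_add_of_le hst
  have := I.mul_mem_right (monomial u 1) hs
  rw [monomial_mul, one_mul] at this
  exact ht this

theorem monomial_one_mem_iff_of_restrictScalars_eq [Nontrivial R] {I : Ideal (MvPolynomial σ R)}
    {V : Set (σ →₀ ℕ)} (hI : I.restrictScalars R = restrictSupport R V) (t : σ →₀ ℕ) :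
    monomial t (1 : R) ∈ I ↔ t ∈ V := by
  rw [← Submodule.restrictScalars_mem R, hI, monomial_mem_restrictSupport]
  simp

noncomputable def linearShift (a b : σ → R) : MvPolynomial σ R →ₐ[R] MvPolynomial σ R :=
  aeval fun i => C (a i) * X i + C (b i)

theorem linearShift_comp_linearShift (a b a' b' : σ → R) :
    (linearShift a b).comp (linearShift a' b') = linearShift (a' * a) (a' * b + b') :=
  algHom_ext fun i => by simp [linearShift, mul_add, ← mul_assoc, add_assoc]

theorem linearShift_one_zero : linearShift (1 : σ → R) 0 = AlgHom.id R (MvPolynomial σ R) :=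
  algHom_ext fun i => by simp [linearShift]

variable (a b : σ → R)

theorem linearShift_monomial_mem_restrictSupport_Iic (t : σ →₀ ℕ) :
    linearShift a b (monomial t 1) ∈ restrictSupport R (Set.Iic t) := by
  induction t using Finsupp.induction with
  | zero =>
    rw [monomial_zero', C_1, map_one, ← C_1, ← monomial_zero']
    exact (monomial_mem_restrictSupport R).2 (.inl Set.self_mem_Iic)
  | single_add i k t _ _ ih =>
    have hX : linearShift a b (X i) ∈ restrictSupport R (Set.Iic (Finsupp.single i 1)) := by
      rw [linearShift, aeval_X, C_mul_X_eq_monomial, ← monomial_zero']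
      exact add_mem ((monomial_mem_restrictSupport R).2 (.inl Set.self_mem_Iic))
        ((monomial_mem_restrictSupport R).2 (.inl (Set.mem_Iic.2 zero_le)))
    rw [← one_mul (1 : R), ← monomial_mul, ← X_pow_eq_monomial, map_mul, map_pow]
    simpa using mul_mem_restrictSupport_Iic (pow_mem_restrictSupport_Iic hX k) ih

theorem linearShift_mem_restrictSupport {O : Set (σ →₀ ℕ)} (hO : IsLowerSet O)
    {p : MvPolynomial σ R} (hp : p ∈ restrictSupport R O) :
    linearShift a b p ∈ restrictSupport R O := by
  rw [restrictSupport_eq_span] at hp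
  induction hp using Submodule.span_induction with
  | mem _ ht =>
    obtain ⟨t, ht, rfl⟩ := ht
    exact restrictSupport_mono R (hO.Iic_subset ht)
      (linearShift_monomial_mem_restrictSupport_Iic a b t)
  | zero => simp
  | add _ _ _ _ hp hq => simpa using add_mem hp hq
  | smul c _ _ hp => simpa using Submodule.smul_mem _ c hp

theorem degree_linearShift_le (m : MonomialOrder σ) (f : MvPolynomial σ R) :
    m.degree (linearShift a b f) ≼[m] m.degree f := by
  refine m.degree_le_iff.2 fun c hc => ?_
  obtain ⟨d, hd, hcd⟩ := mem_lowerClosure.1 <|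
    linearShift_mem_restrictSupport a b (lowerClosure (f.support : Set (σ →₀ ℕ))).lower
      subset_lowerClosure hc
  exact (m.toSyn_monotone hcd).trans (m.le_degree hd)

end CommSemiring

section Field

variable {σ K : Type*} [Field K]

noncomputable def linearShiftEquiv (a b : σ → K) (ha : ∀ i, a i ≠ 0) :
    MvPolynomial σ K ≃ₐ[K] MvPolynomial σ K :=
  AlgEquiv.ofAlgHom (linearShift a b) (linearShift a⁻¹ (-(a⁻¹ * b)))
    (by
      rw [linearShift_comp_linearShift, ← linearShift_one_zero]
      congr 1 <;> ext i <;> simp [ha i])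
    (by
      rw [linearShift_comp_linearShift, ← linearShift_one_zero]
      congr 1 <;> ext i <;> simp [ha i])

variable {a b : σ → K}

theorem linearShift_bijective (ha : ∀ i, a i ≠ 0) : Function.Bijective (linearShift a b) :=
  (linearShiftEquiv a b ha).bijective

theorem degree_linearShift (ha : ∀ i, a i ≠ 0) (m : MonomialOrder σ) (f : MvPolynomial σ K) :
    m.degree (linearShift a b f) = m.degree f := by
  have hinv : linearShift a⁻¹ (-(a⁻¹ * b)) (linearShift a b f) = f :=
    (linearShiftEquiv a b ha).symm_apply_apply f
  refine m.toSyn.injective ((degree_linearShift_le a b m f).antisymm ?_)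
  simpa only [hinv] using degree_linearShift_le a⁻¹ (-(a⁻¹ * b)) m (linearShift a b f)

theorem map_restrictSupport_linearShiftEquiv (ha : ∀ i, a i ≠ 0) {O : Set (σ →₀ ℕ)}
    (hO : IsLowerSet O) :
    (restrictSupport K O).map (linearShiftEquiv a b ha).toLinearEquiv.toLinearMap =
      restrictSupport K O := by
  refine le_antisymm ?_ fun p hp => ⟨(linearShiftEquiv a b ha).symm p, ?_, by simp⟩
  · rintro _ ⟨p, hp, rfl⟩
    exact linearShift_mem_restrictSupport a b hO hp
  · exact linearShift_mem_restrictSupport _ _ hO hp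

theorem restrictScalars_map_linearShift (ha : ∀ i, a i ≠ 0) (I : Ideal (MvPolynomial σ K)) :
    (I.map (linearShift a b : MvPolynomial σ K →+* MvPolynomial σ K)).restrictScalars K =
      (I.restrictScalars K).map (linearShiftEquiv a b ha).toLinearEquiv.toLinearMap := by
  ext f
  exact Ideal.mem_map_iff_of_surjective _ (linearShift_bijective ha).2

theorem isCompl_restrictSupport_map_linearShift_iff (ha : ∀ i, a i ≠ 0)
    {I : Ideal (MvPolynomial σ K)} {V : Set (σ →₀ ℕ)}
    (hI : I.restrictScalars K = restrictSupport K V) {O : Set (σ →₀ ℕ)} (hO : IsLowerSet O) :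
    IsCompl (restrictSupport K O)
        ((I.map (linearShift a b : MvPolynomial σ K →+* MvPolynomial σ K)).restrictScalars K) ↔
      O = {t | monomial t (1 : K) ∉ I} := by
  have hV : {t | monomial t (1 : K) ∉ I} = Vᶜ :=
    Set.ext fun t => (monomial_one_mem_iff_of_restrictScalars_eq hI t).not
  rw [restrictScalars_map_linearShift ha, ← map_restrictSupport_linearShiftEquiv ha hO]
  refine (Submodule.orderIsoMapComap
    (linearShiftEquiv a b ha).toLinearEquiv).isCompl_iff.symm.trans ?_
  rw [hI, isCompl_restrictSupport_iff, hV, eq_compl_iff_isCompl]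

end Field

section CommRing

variable {σ R : Type*} [CommRing R]

theorem linearIndependent_mk_monomial_and_span_eq_top_iff (J : Ideal (MvPolynomial σ R))
    (O : Set (σ →₀ ℕ)) :
    (LinearIndependent R (fun t : O => Ideal.Quotient.mk J (monomial (t : σ →₀ ℕ) (1 : R))) ∧
      Submodule.span R
        (Set.range fun t : O => Ideal.Quotient.mk J (monomial (t : σ →₀ ℕ) (1 : R))) = ⊤) ↔
      IsCompl (restrictSupport R O) (J.restrictScalars R) := by
  set q := (Ideal.Quotient.mkₐ R J).toLinearMap
  set v : O → MvPolynomial σ R := fun t => monomial (t : σ →₀ ℕ) 1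
  have hv : LinearIndependent R v := by
    have := (basisMonomials σ R).linearIndependent.comp ((↑) : O → σ →₀ ℕ)
      Subtype.val_injective
    rwa [coe_basisMonomials] at this
  have hspan : Submodule.span R (Set.range v) = restrictSupport R O := by
    rw [restrictSupport_eq_span, Set.image_eq_range]
  have hker : LinearMap.ker q = J.restrictScalars R := by
    ext f
    simp [q, Ideal.Quotient.eq_zero_iff_mem]
  have hq : LinearMap.range q = ⊤ := LinearMap.range_eq_top.2 Ideal.Quotient.mk_surjective
  change LinearIndependent R (q ∘ v) ∧ Submodule.span R (Set.range (q ∘ v)) = ⊤ ↔ _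
  rw [isCompl_iff, ← hspan, ← hker, Set.range_comp, Submodule.span_image,
    LinearMap.map_eq_top_iff hq, codisjoint_iff]
  exact and_congr_left' ⟨Submodule.range_ker_disjoint, hv.map⟩

end CommRing

end MvPolynomial

theorem leadMonomial_eq_degree {n : ℕ} {K : Type*} [Field K] (m : MonomialOrder (Fin n))
    (f : MvPolynomial (Fin n) K) : leadMonomial m f = m.degree f :=
  rfl

theorem leadTermIdeal_map_linearShift {n : ℕ} {K : Type*} [Field K] {a b : Fin n → K}
    (ha : ∀ i, a i ≠ 0) {I : Ideal (MvPolynomial (Fin n) K)} {V : Set (Fin n →₀ ℕ)}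
    (hI : I.restrictScalars K = restrictSupport K V) (m : MonomialOrder (Fin n)) :
    leadTermIdeal m (I.map (linearShift a b : MvPolynomial (Fin n) K →+* MvPolynomial (Fin n) K))
      = I := by
  have hmem := monomial_one_mem_iff_of_restrictScalars_eq hI
  refine le_antisymm (Ideal.span_le.2 ?_) fun f hf => ?_
  · rintro _ ⟨f, hf, hf0, rfl⟩
    obtain ⟨g, hg, rfl⟩ := (Ideal.mem_map_iff_of_surjective _ (linearShift_bijective ha).2).1 hf
    have hg0 : g ≠ 0 := by
      rintro rfl
      simp at hf0
    rw [SetLike.mem_coe, leadMonomial_eq_degree, degree_linearShift ha, hmem]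
    exact (hI ▸ hg : g ∈ restrictSupport K V) ((m.degree_mem_support_iff g).2 hg0)
  · have hfV : f ∈ restrictSupport K V := hI ▸ hf
    rw [restrictSupport_eq_span] at hfV
    refine (Submodule.span_le (p := (leadTermIdeal m _).restrictScalars K)).2 ?_ hfV
    rintro _ ⟨t, ht, rfl⟩
    refine Ideal.subset_span ⟨linearShift a b (monomial t 1),
      Ideal.mem_map_of_mem _ ((hmem t).2 ht), ?_, ?_⟩
    · exact (map_ne_zero_iff _ (linearShift_bijective ha).1).2 (by simp)
    · classical
      rw [leadMonomial_eq_degree, degree_linearShift ha, m.degree_monomial, if_neg one_ne_zero]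

/-- For a monomial ideal `I` and a linear shift `Φ`, the image ideal `Φ(I)` has
GFan number 1, the monomials outside `I` give a `K`-basis of `P/Φ(I)`, and this
is the unique order ideal with that property. -/
theorem linear_shift_of_monomial_ideal_unique_basic_set
    {n : ℕ} {K : Type*} [Field K]
    (I : Ideal (MvPolynomial (Fin n) K))
    (S : Set (Fin n →₀ ℕ))
    (hmono : I = Ideal.span ((fun t => monomial t (1 : K)) '' S))
    (a b : Fin n → K) (ha : ∀ i, a i ≠ 0)
    (Φ : MvPolynomial (Fin n) K →ₐ[K] MvPolynomial (Fin n) K)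
    (hΦ : ∀ i, Φ (X i) = C (a i) * X i + C (b i)) :
    (∀ m τ : MonomialOrder (Fin n),
        leadTermIdeal m (Ideal.map (Φ : MvPolynomial (Fin n) K →+* MvPolynomial (Fin n) K) I)
          = leadTermIdeal τ (Ideal.map (Φ : MvPolynomial (Fin n) K →+* MvPolynomial (Fin n) K) I)) ∧
    (LinearIndependent K fun t : {t : Fin n →₀ ℕ // monomial t (1 : K) ∉ I} =>
        Ideal.Quotient.mk (Ideal.map (Φ : MvPolynomial (Fin n) K →+* MvPolynomial (Fin n) K) I)
          (monomial (t : Fin n →₀ ℕ) (1 : K))) ∧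
    (Submodule.span K (Set.range fun t : {t : Fin n →₀ ℕ // monomial t (1 : K) ∉ I} =>
        Ideal.Quotient.mk (Ideal.map (Φ : MvPolynomial (Fin n) K →+* MvPolynomial (Fin n) K) I)
          (monomial (t : Fin n →₀ ℕ) (1 : K))) = ⊤) ∧
    (∀ O : Set (Fin n →₀ ℕ),
        (∀ t ∈ O, ∀ s : Fin n →₀ ℕ, s ≤ t → s ∈ O) →
        (LinearIndependent K fun t : O =>
          Ideal.Quotient.mk (Ideal.map (Φ : MvPolynomial (Fin n) K →+* MvPolynomial (Fin n) K) I)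
            (monomial (t : Fin n →₀ ℕ) (1 : K))) →
        (Submodule.span K (Set.range fun t : O =>
          Ideal.Quotient.mk (Ideal.map (Φ : MvPolynomial (Fin n) K →+* MvPolynomial (Fin n) K) I)
            (monomial (t : Fin n →₀ ℕ) (1 : K))) = ⊤) →
        O = {t : Fin n →₀ ℕ | monomial t (1 : K) ∉ I}) := by
  obtain rfl : Φ = linearShift a b := algHom_ext fun i => by rw [hΦ, linearShift, aeval_X]
  have hI : I.restrictScalars K = restrictSupport K (upperClosure S) :=
    hmono ▸ restrictScalars_span_monomial_image S
  have hbasis := fun O (hO : IsLowerSet O) =>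
    (linearIndependent_mk_monomial_and_span_eq_top_iff _ O).trans
      (isCompl_restrictSupport_map_linearShift_iff (b := b) ha hI hO)
  obtain ⟨hli, hspan⟩ := (hbasis _ (isLowerSet_setOf_monomial_notMem I)).2 rfl
  refine ⟨fun m τ => ?_, hli, hspan, fun O hO hLI hSp => ?_⟩
  · rw [leadTermIdeal_map_linearShift ha hI m, leadTermIdeal_map_linearShift ha hI τ]
  · exact (hbasis O fun _ _ hst ht => hO _ ht _ hst).1 ⟨hLI, hSp⟩
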